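/- arXiv:1902.11270 — 2 statements merged into one kernel-verified Lean document; each statement's English description precedes it below -/
import Mathlib

section
/- Let L > 0, let p : [0,L] → ℝ be four times continuously differentiable, and let u : [0,L] → ℝ be three times continuously differentiable with u(0) = u(L) = 0. Then ∫₀^L (p'(x))³ u(x) u'''(x) dx = (9/2) ∫₀^L (p'(x))² p''(x) (u'(x))² dx − (3/2) ∫₀^L ((p')² p'')''(x) u(x)² dx − (1/2) [ (p'(L))³ (u'(L))² − (p'(0))³ (u'(0))² ]. -/
/-!
For the weight `f = (p')³` one has `f' = 3 (p')² p''`, `f'' = 3 q'` and `f''' = 3 q''`, so the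
identity is an instance of
`∫ f u u''' = (3/2) ∫ f' (u')² - (1/2) ∫ f''' u² - (1/2) [f (u')²]₀ᴸ` for `u` vanishing at the
endpoints. This holds because `f u u'' - f (u')²/2 - f' u u' + f'' u²/2` is an antiderivative of
`f u u''' - (3/2) f' (u')² + (1/2) f''' u²`, and its terms containing `u` vanish at both ends.
The integrability of `q''` is not given directly; it follows from identifying `q''` with
`2 (p'')³ + 6 p' p'' p''' + (p')² p''''`.
-/

open Set intervalIntegral

theorem integral_eq_sub_of_hasDerivWithinAt_Icc {F F' : ℝ → ℝ} {a b : ℝ} (hab : a ≤ b)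
    (hF : ∀ x ∈ Icc a b, HasDerivWithinAt F (F' x) (Icc a b) x)
    (hF' : IntervalIntegrable F' MeasureTheory.volume a b) :
    ∫ x in a..b, F' x = F b - F a :=
  integral_eq_sub_of_hasDeriv_right_of_le hab (fun x hx => (hF x hx).continuousWithinAt)
    (fun x hx => ((hF x (Ioo_subset_Icc_self hx)).hasDerivAt
      (Icc_mem_nhds hx.1 hx.2)).hasDerivWithinAt) hF'

section WeightedThirdDerivative

variable {a b x : ℝ} {s : Set ℝ} {f f₁ f₂ f₃ u u₁ u₂ u₃ : ℝ → ℝ}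

theorem hasDerivWithinAt_weighted_third_deriv_antideriv
    (hf : HasDerivWithinAt f (f₁ x) s x) (hf₁ : HasDerivWithinAt f₁ (f₂ x) s x)
    (hf₂ : HasDerivWithinAt f₂ (f₃ x) s x) (hu : HasDerivWithinAt u (u₁ x) s x)
    (hu₁ : HasDerivWithinAt u₁ (u₂ x) s x) (hu₂ : HasDerivWithinAt u₂ (u₃ x) s x) :
    HasDerivWithinAt
      (fun y => f y * u y * u₂ y - f y * u₁ y ^ 2 / 2 - f₁ y * u y * u₁ y + f₂ y * u y ^ 2 / 2)
      (f x * u x * u₃ x - 3 / 2 * (f₁ x * u₁ x ^ 2) + f₃ x * u x ^ 2 / 2) s x := by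
  have := ((((hf.mul hu).mul hu₂).sub ((hf.mul (hu₁.pow 2)).div_const 2)).sub
    ((hf₁.mul hu).mul hu₁)).add ((hf₂.mul (hu.pow 2)).div_const 2)
  exact this.congr_deriv (by simp only [Pi.mul_apply, Pi.pow_apply, Nat.cast_ofNat]; ring)

theorem integral_weight_mul_mul_third_deriv (hab : a ≤ b)
    (hf : ∀ x ∈ Icc a b, HasDerivWithinAt f (f₁ x) (Icc a b) x)
    (hf₁ : ∀ x ∈ Icc a b, HasDerivWithinAt f₁ (f₂ x) (Icc a b) x)
    (hf₂ : ∀ x ∈ Icc a b, HasDerivWithinAt f₂ (f₃ x) (Icc a b) x)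
    (hf₃ : ContinuousOn f₃ (Icc a b))
    (hu : ∀ x ∈ Icc a b, HasDerivWithinAt u (u₁ x) (Icc a b) x)
    (hu₁ : ∀ x ∈ Icc a b, HasDerivWithinAt u₁ (u₂ x) (Icc a b) x)
    (hu₂ : ∀ x ∈ Icc a b, HasDerivWithinAt u₂ (u₃ x) (Icc a b) x)
    (hu₃ : ContinuousOn u₃ (Icc a b)) (hua : u a = 0) (hub : u b = 0) :
    ∫ x in a..b, f x * u x * u₃ x
      = 3 / 2 * (∫ x in a..b, f₁ x * u₁ x ^ 2)
        - 1 / 2 * (∫ x in a..b, f₃ x * u x ^ 2)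
        - 1 / 2 * (f b * u₁ b ^ 2 - f a * u₁ a ^ 2) := by
  have hfc := HasDerivWithinAt.continuousOn hf
  have hf₁c := HasDerivWithinAt.continuousOn hf₁
  have huc := HasDerivWithinAt.continuousOn hu
  have hu₁c := HasDerivWithinAt.continuousOn hu₁
  have hA : IntervalIntegrable (fun x => f x * u x * u₃ x) MeasureTheory.volume a b :=
    ((hfc.mul huc).mul hu₃).intervalIntegrable_of_Icc hab
  have hB : IntervalIntegrable (fun x => f₁ x * u₁ x ^ 2) MeasureTheory.volume a b :=
    (hf₁c.mul (hu₁c.pow 2)).intervalIntegrable_of_Icc hab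
  have hC : IntervalIntegrable (fun x => f₃ x * u x ^ 2) MeasureTheory.volume a b :=
    (hf₃.mul (huc.pow 2)).intervalIntegrable_of_Icc hab
  have hFTC := integral_eq_sub_of_hasDerivWithinAt_Icc hab
    (fun x hx => hasDerivWithinAt_weighted_third_deriv_antideriv (hf x hx) (hf₁ x hx)
      (hf₂ x hx) (hu x hx) (hu₁ x hx) (hu₂ x hx))
    ((hA.sub (hB.const_mul _)).add (hC.div_const _))
  rw [integral_add (hA.sub (hB.const_mul _)) (hC.div_const _), integral_sub hA (hB.const_mul _),
    integral_const_mul, intervalIntegral.integral_div, hua, hub] at hFTC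
  linarith

end WeightedThirdDerivative

theorem UniqueDiffOn.eqOn_of_hasDerivWithinAt {s : Set ℝ} (hs : UniqueDiffOn ℝ s)
    {f f' g' : ℝ → ℝ} (hf : ∀ x ∈ s, HasDerivWithinAt f (f' x) s x)
    (hg : ∀ x ∈ s, HasDerivWithinAt f (g' x) s x) : EqOn f' g' s :=
  fun x hx => (hs x hx).eq_deriv s (hf x hx) (hg x hx)

theorem continuousOn_second_deriv_sq_mul {s : Set ℝ} (hs : UniqueDiffOn ℝ s)
    {g g₁ g₂ g₃ q₁ q₂ : ℝ → ℝ}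
    (hg : ∀ x ∈ s, HasDerivWithinAt g (g₁ x) s x)
    (hg₁ : ∀ x ∈ s, HasDerivWithinAt g₁ (g₂ x) s x)
    (hg₂ : ∀ x ∈ s, HasDerivWithinAt g₂ (g₃ x) s x) (hg₃ : ContinuousOn g₃ s)
    (hq : ∀ x ∈ s, HasDerivWithinAt (fun y => g y ^ 2 * g₁ y) (q₁ x) s x)
    (hq₁ : ∀ x ∈ s, HasDerivWithinAt q₁ (q₂ x) s x) : ContinuousOn q₂ s := by
  have hq₁_eq : EqOn q₁ (fun x => 2 * g x * g₁ x ^ 2 + g x ^ 2 * g₂ x) s :=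
    hs.eqOn_of_hasDerivWithinAt hq fun x hx =>
      (((hg x hx).pow 2).mul (hg₁ x hx)).congr_deriv
        (by simp only [Pi.pow_apply, Nat.cast_ofNat]; ring)
  have hq₂_eq : EqOn q₂ (fun x => 2 * g₁ x ^ 3 + 6 * g x * g₁ x * g₂ x + g x ^ 2 * g₃ x) s :=
    hs.eqOn_of_hasDerivWithinAt hq₁ fun x hx =>
      ((((hg x hx).const_mul 2).mul ((hg₁ x hx).pow 2)).add
        (((hg x hx).pow 2).mul (hg₂ x hx))).congr hq₁_eq (hq₁_eq hx)
        |>.congr_deriv (by simp only [Pi.pow_apply, Nat.cast_ofNat]; ring)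
  have hgc := HasDerivWithinAt.continuousOn hg
  have hg₁c := HasDerivWithinAt.continuousOn hg₁
  have hg₂c := HasDerivWithinAt.continuousOn hg₂
  refine ContinuousOn.congr ?_ hq₂_eq
  exact (((hg₁c.pow 3).const_smul (2 : ℝ)).add (((hgc.const_smul (6 : ℝ)).mul hg₁c).mul hg₂c)).add
    ((hgc.pow 2).mul hg₃)

theorem carleman_cross_term_I22_general
    (L : ℝ) (hL : 0 < L)
    (p' p'' p''' p'''' u u' u'' u''' q' q'' : ℝ → ℝ)
    (hp2 : ∀ x ∈ Icc (0:ℝ) L, HasDerivWithinAt p' (p'' x) (Icc 0 L) x)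
    (hp3 : ∀ x ∈ Icc (0:ℝ) L, HasDerivWithinAt p'' (p''' x) (Icc 0 L) x)
    (hp4 : ∀ x ∈ Icc (0:ℝ) L, HasDerivWithinAt p''' (p'''' x) (Icc 0 L) x)
    (hpc : ContinuousOn p'''' (Icc 0 L))
    (hu1 : ∀ x ∈ Icc (0:ℝ) L, HasDerivWithinAt u (u' x) (Icc 0 L) x)
    (hu2 : ∀ x ∈ Icc (0:ℝ) L, HasDerivWithinAt u' (u'' x) (Icc 0 L) x)
    (hu3 : ∀ x ∈ Icc (0:ℝ) L, HasDerivWithinAt u'' (u''' x) (Icc 0 L) x)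
    (huc : ContinuousOn u''' (Icc 0 L))
    (hq1 : ∀ x ∈ Icc (0:ℝ) L,
      HasDerivWithinAt (fun y => (p' y) ^ 2 * p'' y) (q' x) (Icc 0 L) x)
    (hq2 : ∀ x ∈ Icc (0:ℝ) L, HasDerivWithinAt q' (q'' x) (Icc 0 L) x)
    (hu0 : u 0 = 0) (huL : u L = 0) :
    (∫ x in (0:ℝ)..L, (p' x) ^ 3 * u x * u''' x)
      = (9 / 2) * (∫ x in (0:ℝ)..L, (p' x) ^ 2 * p'' x * (u' x) ^ 2)
        - (3 / 2) * (∫ x in (0:ℝ)..L, q'' x * (u x) ^ 2)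
        - (1 / 2) * ((p' L) ^ 3 * (u' L) ^ 2 - (p' 0) ^ 3 * (u' 0) ^ 2) := by
  have hcube : ∀ x ∈ Icc (0:ℝ) L,
      HasDerivWithinAt (fun y => p' y ^ 3) (3 * (p' x ^ 2 * p'' x)) (Icc 0 L) x := fun x hx =>
    ((hp2 x hx).pow 3).congr_deriv (by simp only [Nat.cast_ofNat]; ring)
  have hq''c : ContinuousOn q'' (Icc 0 L) :=
    continuousOn_second_deriv_sq_mul (uniqueDiffOn_Icc hL) hp2 hp3 hp4 hpc hq1 hq2
  have hweighted := integral_weight_mul_mul_third_deriv hL.le hcube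
    (fun x hx => (hq1 x hx).const_mul 3) (fun x hx => (hq2 x hx).const_mul 3)
    (hq''c.const_smul (3 : ℝ)) hu1 hu2 hu3 huc hu0 huL
  simp only [mul_assoc (3 : ℝ), integral_const_mul] at hweighted
  linarith

/-- Integration-by-parts identity for the cross term `I^{2,2}` of the Carleman estimate:
for `p` four times continuously differentiable on `[0,L]` and `u` three times
continuously differentiable with `u(0) = u(L) = 0`,
`∫ (p')³ u u''' = (9/2) ∫ (p')² p'' (u')² - (3/2) ∫ ((p')²p'')'' u²
  - (1/2) [ (p'(L))³ (u'(L))² - (p'(0))³ (u'(0))² ]`,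
where `q' , q''` denote the first and second derivatives of `(p')² p''`. -/
theorem carleman_cross_term_I22
    (L : ℝ) (hL : 0 < L)
    (p p' p'' p''' p'''' u u' u'' u''' q' q'' : ℝ → ℝ)
    (hp1 : ∀ x ∈ Icc (0:ℝ) L, HasDerivWithinAt p (p' x) (Icc 0 L) x)
    (hp2 : ∀ x ∈ Icc (0:ℝ) L, HasDerivWithinAt p' (p'' x) (Icc 0 L) x)
    (hp3 : ∀ x ∈ Icc (0:ℝ) L, HasDerivWithinAt p'' (p''' x) (Icc 0 L) x)
    (hp4 : ∀ x ∈ Icc (0:ℝ) L, HasDerivWithinAt p''' (p'''' x) (Icc 0 L) x)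
    (hpc : ContinuousOn p'''' (Icc 0 L))
    (hu1 : ∀ x ∈ Icc (0:ℝ) L, HasDerivWithinAt u (u' x) (Icc 0 L) x)
    (hu2 : ∀ x ∈ Icc (0:ℝ) L, HasDerivWithinAt u' (u'' x) (Icc 0 L) x)
    (hu3 : ∀ x ∈ Icc (0:ℝ) L, HasDerivWithinAt u'' (u''' x) (Icc 0 L) x)
    (huc : ContinuousOn u''' (Icc 0 L))
    (hq1 : ∀ x ∈ Icc (0:ℝ) L,
      HasDerivWithinAt (fun y => (p' y) ^ 2 * p'' y) (q' x) (Icc 0 L) x)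
    (hq2 : ∀ x ∈ Icc (0:ℝ) L, HasDerivWithinAt q' (q'' x) (Icc 0 L) x)
    (hu0 : u 0 = 0) (huL : u L = 0) :
    (∫ x in (0:ℝ)..L, (p' x) ^ 3 * u x * u''' x)
      = (9 / 2) * (∫ x in (0:ℝ)..L, (p' x) ^ 2 * p'' x * (u' x) ^ 2)
        - (3 / 2) * (∫ x in (0:ℝ)..L, q'' x * (u x) ^ 2)
        - (1 / 2) * ((p' L) ^ 3 * (u' L) ^ 2 - (p' 0) ^ 3 * (u' 0) ^ 2) :=
  carleman_cross_term_I22_general L hL p' p'' p''' p'''' u u' u'' u''' q' q'' hp2 hp3 hp4 hpc hu1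
    hu2 hu3 huc hq1 hq2 hu0 huL
end

section
/- Let L, T > 0, let q : [0,L] × [0,T] → ℝ be continuously differentiable (in both variables), and let w : [0,L] × [0,T] → ℝ have continuous partial derivatives ∂_t w, ∂_x w, ∂²_x w and ∂_x∂_t w on [0,L] × [0,T], with w(x,0) = w(x,T) = 0 for all x ∈ [0,L]. Then ∫₀^T ∫₀^L [ q ∂_t w ∂²_x w + (∂_x q) ∂_t w ∂_x w ] dx dt = (1/2) ∫₀^T ∫₀^L (∂_t q) (∂_x w)² dx dt + ∫₀^T [ q(L,t) ∂_x w(L,t) ∂_t w(L,t) − q(0,t) ∂_x w(0,t) ∂_t w(0,t) ] dt. -/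
/-!
Integrate by parts in `x` the product of `q w_x` with `w_t`: this produces the boundary term and
`-∫∫ q w_x w_xt`. Since `w_xt = ∂_x ∂_t w` is continuous, the partials commute, so `w_xt` is also
the time derivative of `w_x`, and `q w_x w_xt = ∂_t (q w_x² / 2) - q_t w_x² / 2`. As `w` vanishes
at `t = 0` and `t = T`, so does `w_x`, and integrating in `t` (after Fubini) leaves
`(1/2) ∫∫ q_t w_x²`.
-/

open Set intervalIntegral MeasureTheory

theorem integral_eq_sub_of_hasDerivWithinAt_Icc_s10 {a b : ℝ} {f f' : ℝ → ℝ} (hab : a ≤ b)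
    (hf : ∀ x ∈ Icc a b, HasDerivWithinAt f (f' x) (Icc a b) x)
    (hf' : ContinuousOn f' (Icc a b)) : ∫ x in a..b, f' x = f b - f a :=
  integral_eq_sub_of_hasDeriv_right_of_le hab (fun x hx => (hf x hx).continuousWithinAt)
    (fun x hx => ((hf x (Ioo_subset_Icc_self hx)).hasDerivAt
      (Icc_mem_nhds hx.1 hx.2)).hasDerivWithinAt)
    (hf'.intervalIntegrable_of_Icc hab)

theorem hasDerivWithinAt_integral_Icc {a b t : ℝ} {g : ℝ → ℝ} (hg : ContinuousOn g (Icc a b))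
    (ht : t ∈ Icc a b) :
    HasDerivWithinAt (fun u => ∫ τ in a..u, g τ) (g t) (Icc a b) t := by
  have hab : a ≤ b := ht.1.trans ht.2
  set G : ℝ → ℝ := fun u => g (projIcc a b hab u)
  have hG : Continuous G :=
    hg.comp_continuous (continuous_subtype_val.comp continuous_projIcc)
      fun u => (projIcc a b hab u).2
  have hGg : EqOn G g (Icc a b) := fun u hu => by simp [G, projIcc_of_mem hab hu]
  have hint : ∀ u ∈ Icc a b, ∫ τ in a..u, g τ = ∫ τ in a..u, G τ := fun u hu =>
    integral_congr fun τ hτ =>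
      (hGg (Icc_subset_Icc_right hu.2 (by rwa [uIcc_of_le hu.1] at hτ))).symm
  rw [← hGg ht]
  exact (hG.integral_hasStrictDerivAt a t).hasDerivAt.hasDerivWithinAt.congr hint (hint t ht)

theorem HasDerivWithinAt.eq_zero_of_forall_eq_zero {a b x f' : ℝ} {f : ℝ → ℝ} (hab : a < b)
    (hx : x ∈ Icc a b) (hf : ∀ y ∈ Icc a b, f y = 0) (h : HasDerivWithinAt f f' (Icc a b) x) :
    f' = 0 :=
  (uniqueDiffOn_Icc hab x hx).eq_deriv _ h <|
    (hasDerivWithinAt_const x _ 0).congr hf (hf x hx)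

theorem intervalIntegral_swap_of_continuousOn {a b c d : ℝ} (hab : a ≤ b) (hcd : c ≤ d)
    {f : ℝ → ℝ → ℝ} (hf : ContinuousOn (fun p : ℝ × ℝ => f p.1 p.2) (Icc a b ×ˢ Icc c d)) :
    ∫ x in a..b, ∫ t in c..d, f x t = ∫ t in c..d, ∫ x in a..b, f x t :=
  intervalIntegral_intervalIntegral_swap <|
    (hf.integrableOn_compact (isCompact_Icc.prod isCompact_Icc)).mono_set <| by
      rw [uIoc_of_le hab, uIoc_of_le hcd]
      exact prod_mono Ioc_subset_Icc_self Ioc_subset_Icc_self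

theorem continuousOn_intervalIntegral_of_continuousOn {a b c d : ℝ} (hab : a ≤ b) (hcd : c ≤ d)
    {f : ℝ → ℝ → ℝ} (hf : ContinuousOn (fun p : ℝ × ℝ => f p.1 p.2) (Icc a b ×ˢ Icc c d)) :
    ContinuousOn (fun x => ∫ t in c..d, f x t) (Icc a b) := by
  set F : ℝ → ℝ → ℝ := fun x t => f (projIcc a b hab x) (projIcc c d hcd t)
  have hF : Continuous F.uncurry :=
    hf.comp_continuous
      (f := fun p : ℝ × ℝ => ((projIcc a b hab p.1 : ℝ), (projIcc c d hcd p.2 : ℝ)))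
      (by fun_prop) fun p => ⟨(projIcc a b hab p.1).2, (projIcc c d hcd p.2).2⟩
  refine (continuous_parametric_intervalIntegral_of_continuous' hF c d).continuousOn.congr
    fun x hx => integral_congr fun t ht => ?_
  rw [uIcc_of_le hcd] at ht
  simp [F, projIcc_of_mem hab hx, projIcc_of_mem hcd ht]

section MixedPartials

variable {a b c d : ℝ} {w wt wx wxt : ℝ → ℝ → ℝ}
  (hwt : ContinuousOn (fun p : ℝ × ℝ => wt p.1 p.2) (Icc a b ×ˢ Icc c d))
  (hwxt : ContinuousOn (fun p : ℝ × ℝ => wxt p.1 p.2) (Icc a b ×ˢ Icc c d))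
  (hdwt : ∀ x ∈ Icc a b, ∀ t ∈ Icc c d,
    HasDerivWithinAt (fun t => w x t) (wt x t) (Icc c d) t)
  (hdwx : ∀ t ∈ Icc c d, ∀ x ∈ Icc a b,
    HasDerivWithinAt (fun x => w x t) (wx x t) (Icc a b) x)
  (hdwxt : ∀ t ∈ Icc c d, ∀ x ∈ Icc a b,
    HasDerivWithinAt (fun x => wt x t) (wxt x t) (Icc a b) x)
include hwt hwxt hdwt hdwx hdwxt

/- `∫_a^z ∫_c^s wxt y τ dτ dy` is computed by Fubini and two applications of FTC; differentiating
it in `z` at `x` gives the claim. -/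
theorem integral_mixed_partial_eq_sub (hab : a < b) {x s : ℝ} (hx : x ∈ Icc a b)
    (hs : s ∈ Icc c d) : ∫ τ in c..s, wxt x τ = wx x s - wx x c := by
  have hcs : Icc c s ⊆ Icc c d := Icc_subset_Icc_right hs.2
  have ha : a ∈ Icc a b := left_mem_Icc.2 hab.le
  have hprim : ∀ z ∈ Icc a b, ∫ y in a..z, ∫ τ in c..s, wxt y τ
      = (w z s - w a s) - (w z c - w a c) := by
    intro z hz
    have haz : Icc a z ⊆ Icc a b := Icc_subset_Icc_right hz.2
    rw [intervalIntegral_swap_of_continuousOn hz.1 hs.1 (hwxt.mono (prod_mono haz hcs))]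
    have hinner : ∀ τ ∈ uIcc c s, ∫ y in a..z, wxt y τ = wt z τ - wt a τ := by
      intro τ hτ
      rw [uIcc_of_le hs.1] at hτ
      exact integral_eq_sub_of_hasDerivWithinAt_Icc_s10 hz.1
        (fun y hy => (hdwxt τ (hcs hτ) y (haz hy)).mono haz)
        ((hwxt.uncurry_right (f := wxt) τ (hcs hτ)).mono haz)
    rw [integral_congr hinner, integral_eq_sub_of_hasDerivWithinAt_Icc_s10 hs.1
      (fun τ hτ => ((hdwt z hz τ (hcs hτ)).sub (hdwt a ha τ (hcs hτ))).mono hcs)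
      (((hwt.uncurry_left (f := wt) z hz).sub (hwt.uncurry_left (f := wt) a ha)).mono hcs)]
    rfl
  have hφ : ContinuousOn (fun y => ∫ τ in c..s, wxt y τ) (Icc a b) :=
    continuousOn_intervalIntegral_of_continuousOn hab.le hs.1 (hwxt.mono (prod_mono subset_rfl hcs))
  have hderiv : HasDerivWithinAt (fun z => (w z s - w a s) - (w z c - w a c))
      (∫ τ in c..s, wxt x τ) (Icc a b) x :=
    (hasDerivWithinAt_integral_Icc hφ hx).congr (fun z hz => (hprim z hz).symm)
      (hprim x hx).symm
  exact (uniqueDiffOn_Icc hab x hx).eq_deriv _ hderiv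
    (((hdwx s hs x hx).sub_const _).sub
      ((hdwx c (left_mem_Icc.2 (hs.1.trans hs.2)) x hx).sub_const _))

theorem hasDerivWithinAt_of_mixed_partial (hab : a < b) {x t : ℝ} (hx : x ∈ Icc a b)
    (ht : t ∈ Icc c d) : HasDerivWithinAt (fun t => wx x t) (wxt x t) (Icc c d) t :=
  ((hasDerivWithinAt_integral_Icc (hwxt.uncurry_left (f := wxt) x hx) ht).const_add (wx x c)).congr
    (fun s hs => by
      rw [integral_mixed_partial_eq_sub hwt hwxt hdwt hdwx hdwxt hab hx hs]; ring)
    (by rw [integral_mixed_partial_eq_sub hwt hwxt hdwt hdwx hdwxt hab hx ht]; ring)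

end MixedPartials

section IntegrationByParts

variable {a b : ℝ} {q q' g g' v v' : ℝ → ℝ}
  (hq : ∀ x ∈ Icc a b, HasDerivWithinAt q (q' x) (Icc a b) x)
  (hg : ∀ x ∈ Icc a b, HasDerivWithinAt g (g' x) (Icc a b) x)
  (hq' : ContinuousOn q' (Icc a b)) (hg' : ContinuousOn g' (Icc a b))
include hq hg hq' hg'

theorem integral_mul_mul_deriv_add_deriv_mul_mul (hab : a ≤ b)
    (hv : ∀ x ∈ Icc a b, HasDerivWithinAt v (v' x) (Icc a b) x) (hv' : ContinuousOn v' (Icc a b)) :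
    ∫ x in a..b, q x * v x * g' x + q' x * v x * g x
      = q b * g b * v b - q a * g a * v a - ∫ x in a..b, q x * g x * v' x := by
  rw [← uIcc_of_le hab] at hq hg hv hq' hg' hv'
  have hqc : ContinuousOn q (uIcc a b) := fun x hx => (hq x hx).continuousWithinAt
  have hgc : ContinuousOn g (uIcc a b) := fun x hx => (hg x hx).continuousWithinAt
  have hqg' : ContinuousOn (fun x => q' x * g x + q x * g' x) (uIcc a b) :=
    (hq'.fun_mul hgc).fun_add (hqc.fun_mul hg')
  have hibp := integral_mul_deriv_eq_deriv_mul_of_hasDerivWithinAt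
    (fun x hx => (hq x hx).fun_mul (hg x hx)) hv hqg'.intervalIntegrable hv'.intervalIntegrable
  have hrearrange : ∫ x in a..b, q x * v x * g' x + q' x * v x * g x
      = ∫ x in a..b, (q' x * g x + q x * g' x) * v x :=
    integral_congr fun x _ => by ring
  rw [hrearrange]
  linarith

theorem integral_mul_mul_deriv_eq_neg_half (hab : a ≤ b) (ha : g a = 0) (hb : g b = 0) :
    ∫ x in a..b, q x * g x * g' x = -(1 / 2) * ∫ x in a..b, q' x * g x ^ 2 := by
  have hqc : ContinuousOn q (Icc a b) := fun x hx => (hq x hx).continuousWithinAt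
  have hgc : ContinuousOn g (Icc a b) := fun x hx => (hg x hx).continuousWithinAt
  have hibp := integral_mul_mul_deriv_add_deriv_mul_mul hq hg hq' hg' hab hg hg'
  have hsplit : ∫ x in a..b, q x * g x * g' x + q' x * g x * g x
      = (∫ x in a..b, q x * g x * g' x) + ∫ x in a..b, q' x * g x ^ 2 := by
    rw [← intervalIntegral.integral_add
      (((hqc.fun_mul hgc).fun_mul hg').intervalIntegrable_of_Icc hab)
      ((hq'.fun_mul (hgc.fun_pow 2)).intervalIntegrable_of_Icc hab)]
    exact integral_congr fun x _ => by ring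
  rw [hsplit, ha, hb] at hibp
  linarith

end IntegrationByParts

theorem carleman_cross_terms_I11_I13_general
    (L T : ℝ) (hL : 0 < L) (hT : 0 < T)
    (q qx qt w wt wx wxx wxt : ℝ → ℝ → ℝ)
    (hq : ContinuousOn (fun p : ℝ × ℝ => q p.1 p.2) (Icc 0 L ×ˢ Icc 0 T))
    (hqxc : ContinuousOn (fun p : ℝ × ℝ => qx p.1 p.2) (Icc 0 L ×ˢ Icc 0 T))
    (hqtc : ContinuousOn (fun p : ℝ × ℝ => qt p.1 p.2) (Icc 0 L ×ˢ Icc 0 T))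
    (hdqx : ∀ t ∈ Icc (0:ℝ) T, ∀ x ∈ Icc (0:ℝ) L,
      HasDerivWithinAt (fun x' => q x' t) (qx x t) (Icc 0 L) x)
    (hdqt : ∀ x ∈ Icc (0:ℝ) L, ∀ t ∈ Icc (0:ℝ) T,
      HasDerivWithinAt (fun t' => q x t') (qt x t) (Icc 0 T) t)
    (hwtc : ContinuousOn (fun p : ℝ × ℝ => wt p.1 p.2) (Icc 0 L ×ˢ Icc 0 T))
    (hwxc : ContinuousOn (fun p : ℝ × ℝ => wx p.1 p.2) (Icc 0 L ×ˢ Icc 0 T))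
    (hwxxc : ContinuousOn (fun p : ℝ × ℝ => wxx p.1 p.2) (Icc 0 L ×ˢ Icc 0 T))
    (hwxtc : ContinuousOn (fun p : ℝ × ℝ => wxt p.1 p.2) (Icc 0 L ×ˢ Icc 0 T))
    (hdwt : ∀ x ∈ Icc (0:ℝ) L, ∀ t ∈ Icc (0:ℝ) T,
      HasDerivWithinAt (fun t' => w x t') (wt x t) (Icc 0 T) t)
    (hdwx : ∀ t ∈ Icc (0:ℝ) T, ∀ x ∈ Icc (0:ℝ) L,
      HasDerivWithinAt (fun x' => w x' t) (wx x t) (Icc 0 L) x)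
    (hdwxx : ∀ t ∈ Icc (0:ℝ) T, ∀ x ∈ Icc (0:ℝ) L,
      HasDerivWithinAt (fun x' => wx x' t) (wxx x t) (Icc 0 L) x)
    (hdwxt : ∀ t ∈ Icc (0:ℝ) T, ∀ x ∈ Icc (0:ℝ) L,
      HasDerivWithinAt (fun x' => wt x' t) (wxt x t) (Icc 0 L) x)
    (hw0 : ∀ x ∈ Icc (0:ℝ) L, w x 0 = 0)
    (hwT : ∀ x ∈ Icc (0:ℝ) L, w x T = 0) :
    (∫ t in (0:ℝ)..T, ∫ x in (0:ℝ)..L,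
        q x t * wt x t * wxx x t + qx x t * wt x t * wx x t)
      = (1 / 2) * (∫ t in (0:ℝ)..T, ∫ x in (0:ℝ)..L, qt x t * (wx x t) ^ 2)
        + (∫ t in (0:ℝ)..T,
            q L t * wx L t * wt L t - q 0 t * wx 0 t * wt 0 t) := by
  have hinner : ∀ t ∈ uIcc 0 T,
      ∫ x in (0:ℝ)..L, q x t * wt x t * wxx x t + qx x t * wt x t * wx x t
        = (q L t * wx L t * wt L t - q 0 t * wx 0 t * wt 0 t)
          - ∫ x in (0:ℝ)..L, q x t * wx x t * wxt x t := fun t ht => by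
    rw [uIcc_of_le hT.le] at ht
    exact integral_mul_mul_deriv_add_deriv_mul_mul (hdqx t ht) (hdwxx t ht)
      (hqxc.uncurry_right (f := qx) t ht) (hwxxc.uncurry_right (f := wxx) t ht) hL.le
      (hdwxt t ht) (hwxtc.uncurry_right (f := wxt) t ht)
  have htime : ∀ x ∈ uIcc 0 L,
      ∫ t in (0:ℝ)..T, q x t * wx x t * wxt x t
        = -(1 / 2) * ∫ t in (0:ℝ)..T, qt x t * wx x t ^ 2 := fun x hx => by
    rw [uIcc_of_le hL.le] at hx
    exact integral_mul_mul_deriv_eq_neg_half (hdqt x hx)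
      (fun t ht => hasDerivWithinAt_of_mixed_partial hwtc hwxtc hdwt hdwx hdwxt hL hx ht)
      (hqtc.uncurry_left (f := qt) x hx) (hwxtc.uncurry_left (f := wxt) x hx) hT.le
      ((hdwx 0 (left_mem_Icc.2 hT.le) x hx).eq_zero_of_forall_eq_zero hL hx hw0)
      ((hdwx T (right_mem_Icc.2 hT.le) x hx).eq_zero_of_forall_eq_zero hL hx hwT)
  have hflux : ∀ x ∈ Icc 0 L, ContinuousOn (fun t => q x t * wx x t * wt x t) (Icc 0 T) :=
    fun x hx => ((hq.mul hwxc).mul hwtc).uncurry_left (f := fun x t => q x t * wx x t * wt x t) x hx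
  have hboundary : IntervalIntegrable
      (fun t => q L t * wx L t * wt L t - q 0 t * wx 0 t * wt 0 t) volume 0 T :=
    ((hflux L (right_mem_Icc.2 hL.le)).fun_sub
      (hflux 0 (left_mem_Icc.2 hL.le))).intervalIntegrable_of_Icc hT.le
  have hcross : ContinuousOn (fun p : ℝ × ℝ => q p.1 p.2 * wx p.1 p.2 * wxt p.1 p.2)
      (Icc 0 L ×ˢ Icc 0 T) := (hq.mul hwxc).mul hwxtc
  have hcross_int : IntervalIntegrable
      (fun t => ∫ x in (0:ℝ)..L, q x t * wx x t * wxt x t) volume 0 T :=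
    (continuousOn_intervalIntegral_of_continuousOn hT.le hL.le
      (f := fun t x => q x t * wx x t * wxt x t)
      (hcross.comp continuous_swap.continuousOn fun _ hp => ⟨hp.2, hp.1⟩)).intervalIntegrable_of_Icc
        hT.le
  rw [integral_congr hinner, intervalIntegral.integral_sub hboundary hcross_int,
    ← intervalIntegral_swap_of_continuousOn hL.le hT.le hcross, integral_congr htime,
    intervalIntegral.integral_const_mul,
    ← intervalIntegral_swap_of_continuousOn hL.le hT.le (hqtc.mul (hwxc.pow 2))]
  ring

/-- Combined integration-by-parts identity for the cross terms `I^{1,1} + I^{1,3}` of the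
Carleman estimate: with `q` of class `C¹` on the rectangle and `w` vanishing at `t = 0, T`,
`∫∫ [q w_t w_xx + q_x w_t w_x] = (1/2) ∫∫ q_t (w_x)²
  + ∫₀^T [ q(L,t) w_x(L,t) w_t(L,t) - q(0,t) w_x(0,t) w_t(0,t) ] dt`. -/
theorem carleman_cross_terms_I11_I13
    (L T : ℝ) (hL : 0 < L) (hT : 0 < T)
    (q qx qt w wt wx wxx wxt : ℝ → ℝ → ℝ)
    (hq : ContinuousOn (fun p : ℝ × ℝ => q p.1 p.2) (Icc 0 L ×ˢ Icc 0 T))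
    (hqxc : ContinuousOn (fun p : ℝ × ℝ => qx p.1 p.2) (Icc 0 L ×ˢ Icc 0 T))
    (hqtc : ContinuousOn (fun p : ℝ × ℝ => qt p.1 p.2) (Icc 0 L ×ˢ Icc 0 T))
    (hdqx : ∀ t ∈ Icc (0:ℝ) T, ∀ x ∈ Icc (0:ℝ) L,
      HasDerivWithinAt (fun x' => q x' t) (qx x t) (Icc 0 L) x)
    (hdqt : ∀ x ∈ Icc (0:ℝ) L, ∀ t ∈ Icc (0:ℝ) T,
      HasDerivWithinAt (fun t' => q x t') (qt x t) (Icc 0 T) t)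
    (hw : ContinuousOn (fun p : ℝ × ℝ => w p.1 p.2) (Icc 0 L ×ˢ Icc 0 T))
    (hwtc : ContinuousOn (fun p : ℝ × ℝ => wt p.1 p.2) (Icc 0 L ×ˢ Icc 0 T))
    (hwxc : ContinuousOn (fun p : ℝ × ℝ => wx p.1 p.2) (Icc 0 L ×ˢ Icc 0 T))
    (hwxxc : ContinuousOn (fun p : ℝ × ℝ => wxx p.1 p.2) (Icc 0 L ×ˢ Icc 0 T))
    (hwxtc : ContinuousOn (fun p : ℝ × ℝ => wxt p.1 p.2) (Icc 0 L ×ˢ Icc 0 T))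
    (hdwt : ∀ x ∈ Icc (0:ℝ) L, ∀ t ∈ Icc (0:ℝ) T,
      HasDerivWithinAt (fun t' => w x t') (wt x t) (Icc 0 T) t)
    (hdwx : ∀ t ∈ Icc (0:ℝ) T, ∀ x ∈ Icc (0:ℝ) L,
      HasDerivWithinAt (fun x' => w x' t) (wx x t) (Icc 0 L) x)
    (hdwxx : ∀ t ∈ Icc (0:ℝ) T, ∀ x ∈ Icc (0:ℝ) L,
      HasDerivWithinAt (fun x' => wx x' t) (wxx x t) (Icc 0 L) x)
    (hdwxt : ∀ t ∈ Icc (0:ℝ) T, ∀ x ∈ Icc (0:ℝ) L,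
      HasDerivWithinAt (fun x' => wt x' t) (wxt x t) (Icc 0 L) x)
    (hw0 : ∀ x ∈ Icc (0:ℝ) L, w x 0 = 0)
    (hwT : ∀ x ∈ Icc (0:ℝ) L, w x T = 0) :
    (∫ t in (0:ℝ)..T, ∫ x in (0:ℝ)..L,
        q x t * wt x t * wxx x t + qx x t * wt x t * wx x t)
      = (1 / 2) * (∫ t in (0:ℝ)..T, ∫ x in (0:ℝ)..L, qt x t * (wx x t) ^ 2)
        + (∫ t in (0:ℝ)..T,
            q L t * wx L t * wt L t - q 0 t * wx 0 t * wt 0 t) :=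
  carleman_cross_terms_I11_I13_general L T hL hT q qx qt w wt wx wxx wxt hq hqxc hqtc hdqx hdqt hwtc
    hwxc hwxxc hwxtc hdwt hdwx hdwxx hdwxt hw0 hwT
end
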